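/- arXiv:2302.03278 — 3 statements merged into one kernel-verified Lean document; each statement's English description precedes it below -/
import Mathlib

section
/- Let G be a C_3□P_2-free graph and let v_1,...,v_6 be six distinct vertices of G such that v_i and v_j are adjacent whenever 1 ≤ |i−j| ≤ 2 (a copy of P_6^2). Then at most 2 vertices of G outside {v_1,...,v_6} have exactly 4 neighbors in {v_1,...,v_6}. Moreover, if x and y are two distinct such vertices, then x and y are not adjacent, and the unordered pair of their neighbor sets in {v_1,...,v_6} is one of: { {v_1,v_2,v_3,v_4}, {v_1,v_3,v_5,v_6} }, { {v_3,v_4,v_5,v_6}, {v_1,v_2,v_4,v_6} }, or { {v_1,v_2,v_3,v_4}, {v_3,v_4,v_5,v_6} }. -/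
open SimpleGraph

/-- `CopyIn H G` means `G` contains a subgraph isomorphic to `H`,
i.e. there is an injective graph homomorphism from `H` to `G`. -/
def CopyIn {α β : Type*} (H : SimpleGraph α) (G : SimpleGraph β) : Prop :=
  ∃ f : α ↪ β, ∀ a b, H.Adj a b → G.Adj (f a) (f b)

/-- The Turán number `ex(n, H)`: the maximum number of edges in an
`H`-free graph on `n` vertices. -/
noncomputable def exNum {α : Type*} (n : ℕ) (H : SimpleGraph α) : ℕ :=
  sSup {m : ℕ | ∃ G : SimpleGraph (Fin n), ¬ CopyIn H G ∧ G.edgeSet.ncard = m}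

/-- The odd prism `C_{2k+1} □ P_2`. -/
def oddPrism (k : ℕ) : SimpleGraph (Fin (2 * k + 1) × Fin 2) :=
  cycleGraph (2 * k + 1) □ pathGraph 2

/-- `P_6^2`, the square of the path on six vertices: `i` and `j` are adjacent
iff `1 ≤ |i - j| ≤ 2`. -/
def pathSq6 : SimpleGraph (Fin 6) :=
  SimpleGraph.fromRel (fun i j => (i : ℕ) < (j : ℕ) ∧ (j : ℕ) ≤ (i : ℕ) + 2)

/-!
Let `x` be a vertex outside the copy of `P_6²` with exactly four neighbours on it. If `x`, two
adjacent neighbours of `x` and a triangle of the copy span a prism, `G` is not prism-free; a finite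
check shows that only six sets of four indices escape this. For two such vertices `x ≠ y`, prisms
through `x` and `y` rule out every pair of these six sets except three, and each of the three
pairs yields a prism through the edge `xy`, so `x` and `y` are not adjacent. The three pairs form
the path `{0,2,4,5} — {0,1,2,3} — {2,3,4,5} — {0,1,3,5}`, which has no triangle, so there is no
third such vertex.
-/

instance : DecidableRel pathSq6.Adj :=
  fun i j => decidable_of_iff _ (fromRel_adj _ i j).symm

theorem copyIn_oddPrism_one {V : Type*} {G : SimpleGraph V} {a₀ a₁ a₂ b₀ b₁ b₂ : V}
    (ha₀₁ : G.Adj a₀ a₁) (ha₀₂ : G.Adj a₀ a₂) (ha₁₂ : G.Adj a₁ a₂)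
    (hb₀₁ : G.Adj b₀ b₁) (hb₀₂ : G.Adj b₀ b₂) (hb₁₂ : G.Adj b₁ b₂)
    (h₀ : G.Adj a₀ b₀) (h₁ : G.Adj a₁ b₁) (h₂ : G.Adj a₂ b₂)
    (n₀₁ : a₀ ≠ b₁) (n₀₂ : a₀ ≠ b₂) (n₁₀ : a₁ ≠ b₀) (n₁₂ : a₁ ≠ b₂) (n₂₀ : a₂ ≠ b₀)
    (n₂₁ : a₂ ≠ b₁) :
    CopyIn (oddPrism 1) G := by
  let f : Fin 3 × Fin 2 → V := fun p => ![![a₀, b₀], ![a₁, b₁], ![a₂, b₂]] p.1 p.2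
  have adj : ∀ p q, (oddPrism 1).Adj p q → G.Adj (f p) (f q) := by
    rintro ⟨i, k⟩ ⟨j, l⟩ h
    rcases boxProd_adj.1 h with ⟨hij, rfl⟩ | ⟨hkl, rfl⟩
    · have := hij.ne
      fin_cases i <;> fin_cases j <;> fin_cases k <;> simp_all [f, G.adj_comm]
    · have := hkl.ne
      fin_cases i <;> fin_cases k <;> fin_cases l <;> simp_all [f, G.adj_comm]
  refine ⟨⟨f, ?_⟩, adj⟩
  have := ha₀₁.ne; have := ha₀₂.ne; have := ha₁₂.ne; have := hb₀₁.ne; have := hb₀₂.ne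
  have := hb₁₂.ne; have := h₀.ne; have := h₁.ne; have := h₂.ne
  rintro ⟨i, k⟩ ⟨j, l⟩ h
  fin_cases i <;> fin_cases j <;> fin_cases k <;> fin_cases l <;> simp_all [f, eq_comm]

theorem Set.encard_le_two_of_not_three {α : Type*} {s : Set α}
    (h : ∀ x ∈ s, ∀ y ∈ s, ∀ z ∈ s, x ≠ y → x ≠ z → y ≠ z → False) : s.encard ≤ 2 := by
  by_contra! hs
  obtain ⟨t, hts, ht⟩ := Set.exists_subset_encard_eq (Order.add_one_le_of_lt hs)
  obtain ⟨x, y, z, hxy, hxz, hyz, rfl⟩ := Set.encard_eq_three.1 ht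
  exact h x (hts (by simp)) y (hts (by simp)) z (hts (by simp)) hxy hxz hyz

theorem Finset.coe_pair_eq_coe_pair {α : Type*} [DecidableEq α] {A B C D : Finset α}
    (h : ({A, B} : Finset (Finset α)) = {C, D}) :
    ({↑A, ↑B} : Set (Set α)) = {↑C, ↑D} := by
  simpa [Set.image_pair] using
    congrArg (fun F : Finset (Finset α) ↦ ((↑) : Finset α → Set α) '' F) h

/-! For vertices `x`, `y` outside a copy `v` of `P_6²`, `S` and `T` stand for the sets of indices
`i` with `x ~ v i`, resp. `y ~ v i`. Indices are `0`-based: `i` stands for `v_{i+1}`. -/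

/-- Triangles `x v_a v_b` and `v_c v_d v_e`, matched by `x v_c`, `v_a v_d`, `v_b v_e`. -/
def OneApexPrism (S : Finset (Fin 6)) : Prop :=
  ∃ a ∈ S, ∃ b ∈ S, ∃ c ∈ S, ∃ d e : Fin 6, pathSq6.Adj a b ∧ pathSq6.Adj c d ∧
    pathSq6.Adj c e ∧ pathSq6.Adj d e ∧ pathSq6.Adj a d ∧ pathSq6.Adj b e ∧
    a ≠ c ∧ a ≠ e ∧ b ≠ c ∧ b ≠ d

/-- Triangles `x v_a v_b` and `v_c y v_d`, matched by `x v_c`, `v_a y`, `v_b v_d`. -/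
def TwoApexPrism (S T : Finset (Fin 6)) : Prop :=
  ∃ a ∈ S ∩ T, ∃ b ∈ S, ∃ c ∈ S ∩ T, ∃ d ∈ T, pathSq6.Adj a b ∧ pathSq6.Adj c d ∧
    pathSq6.Adj b d ∧ a ≠ c ∧ a ≠ d ∧ b ≠ c

/-- Triangles `x v_a v_b` and `y v_c v_d`, matched by `x y`, `v_a v_c`, `v_b v_d`. -/
def ApexEdgePrism (S T : Finset (Fin 6)) : Prop :=
  ∃ a ∈ S, ∃ b ∈ S, ∃ c ∈ T, ∃ d ∈ T, pathSq6.Adj a b ∧ pathSq6.Adj c d ∧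
    pathSq6.Adj a c ∧ pathSq6.Adj b d ∧ a ≠ d ∧ b ≠ c

instance : DecidablePred OneApexPrism := fun S => by unfold OneApexPrism; infer_instance

instance (S T : Finset (Fin 6)) : Decidable (TwoApexPrism S T) := by
  unfold TwoApexPrism; infer_instance

instance (S T : Finset (Fin 6)) : Decidable (ApexEdgePrism S T) := by
  unfold ApexEdgePrism; infer_instance

section

set_option maxRecDepth 10000

def admissibleQuadruples : Finset (Finset (Fin 6)) :=
  {{0, 1, 2, 3}, {2, 3, 4, 5}, {0, 2, 4, 5}, {0, 1, 3, 5}, {1, 2, 3, 4}, {0, 2, 3, 5}}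

def IsExceptionalPair (S T : Finset (Fin 6)) : Prop :=
  ({S, T} : Finset (Finset (Fin 6))) = {{0, 1, 2, 3}, {0, 2, 4, 5}} ∨
    ({S, T} : Finset (Finset (Fin 6))) = {{2, 3, 4, 5}, {0, 1, 3, 5}} ∨
    ({S, T} : Finset (Finset (Fin 6))) = {{0, 1, 2, 3}, {2, 3, 4, 5}}

instance (S T : Finset (Fin 6)) : Decidable (IsExceptionalPair S T) := by
  unfold IsExceptionalPair; infer_instance

theorem mem_admissibleQuadruples {S : Finset (Fin 6)} (hS : S.card = 4)
    (h : ¬ OneApexPrism S) : S ∈ admissibleQuadruples := by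
  revert S; decide

theorem isExceptionalPair_of_not_twoApexPrism {S T : Finset (Fin 6)}
    (hS : S ∈ admissibleQuadruples) (hT : T ∈ admissibleQuadruples)
    (hST : ¬ TwoApexPrism S T) (hTS : ¬ TwoApexPrism T S) : IsExceptionalPair S T := by
  have : ∀ S ∈ admissibleQuadruples, ∀ T ∈ admissibleQuadruples,
      ¬ TwoApexPrism S T → ¬ TwoApexPrism T S → IsExceptionalPair S T := by decide
  exact this S hS T hT hST hTS

theorem IsExceptionalPair.apexEdgePrism {S T : Finset (Fin 6)} (hS : S ∈ admissibleQuadruples)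
    (hT : T ∈ admissibleQuadruples) (h : IsExceptionalPair S T) : ApexEdgePrism S T := by
  have : ∀ S ∈ admissibleQuadruples, ∀ T ∈ admissibleQuadruples,
      IsExceptionalPair S T → ApexEdgePrism S T := by decide
  exact this S hS T hT h

theorem IsExceptionalPair.not_triangle {S T U : Finset (Fin 6)} (hS : S ∈ admissibleQuadruples)
    (hT : T ∈ admissibleQuadruples) (hU : U ∈ admissibleQuadruples)
    (hST : IsExceptionalPair S T) (hSU : IsExceptionalPair S U) : ¬ IsExceptionalPair T U := by
  have : ∀ S ∈ admissibleQuadruples, ∀ T ∈ admissibleQuadruples, ∀ U ∈ admissibleQuadruples,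
      IsExceptionalPair S T → IsExceptionalPair S U → ¬ IsExceptionalPair T U := by decide
  exact this S hS T hT U hU hST hSU

end

theorem IsExceptionalPair.coe {S T : Finset (Fin 6)} (h : IsExceptionalPair S T) :
    ({↑S, ↑T} : Set (Set (Fin 6))) = {{0, 1, 2, 3}, {0, 2, 4, 5}} ∨
      ({↑S, ↑T} : Set (Set (Fin 6))) = {{2, 3, 4, 5}, {0, 1, 3, 5}} ∨
      ({↑S, ↑T} : Set (Set (Fin 6))) = {{0, 1, 2, 3}, {2, 3, 4, 5}} := by
  rcases h with h | h | h <;> simp [Finset.coe_pair_eq_coe_pair h]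

open Classical in
noncomputable def nbrIndices {V : Type*} (G : SimpleGraph V) (v : Fin 6 ↪ V) (x : V) :
    Finset (Fin 6) :=
  {i | G.Adj x (v i)}

section

variable {V : Type*} {G : SimpleGraph V} {v : Fin 6 ↪ V}

theorem mem_nbrIndices {x : V} {i : Fin 6} : i ∈ nbrIndices G v x ↔ G.Adj x (v i) := by
  simp [nbrIndices]

theorem coe_nbrIndices (x : V) : (nbrIndices G v x : Set (Fin 6)) = {i | G.Adj x (v i)} := by
  ext; simp [nbrIndices]

theorem not_oneApexPrism (hfree : ¬ CopyIn (oddPrism 1) G)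
    (hv : ∀ i j, pathSq6.Adj i j → G.Adj (v i) (v j)) {x : V} (hx : x ∉ Set.range v) :
    ¬ OneApexPrism (nbrIndices G v x) := by
  rintro ⟨a, ha, b, hb, c, hc, d, e, hab, hcd, hce, hde, had, hbe, hac, hae, hbc, hbd⟩
  rw [mem_nbrIndices] at ha hb hc
  have hxv (i : Fin 6) : x ≠ v i := fun h ↦ hx ⟨i, h.symm⟩
  exact hfree <| copyIn_oddPrism_one ha hb (hv a b hab) (hv c d hcd) (hv c e hce) (hv d e hde)
    hc (hv a d had) (hv b e hbe) (hxv d) (hxv e) (v.injective.ne hac) (v.injective.ne hae)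
    (v.injective.ne hbc) (v.injective.ne hbd)

theorem not_twoApexPrism (hfree : ¬ CopyIn (oddPrism 1) G)
    (hv : ∀ i j, pathSq6.Adj i j → G.Adj (v i) (v j)) {x y : V} (hxy : x ≠ y)
    (hx : x ∉ Set.range v) (hy : y ∉ Set.range v) :
    ¬ TwoApexPrism (nbrIndices G v x) (nbrIndices G v y) := by
  rintro ⟨a, ha, b, hb, c, hc, d, hd, hab, hcd, hbd, hac, had, hbc⟩
  simp only [Finset.mem_inter, mem_nbrIndices] at ha hb hc hd
  have hxv (i : Fin 6) : x ≠ v i := fun h ↦ hx ⟨i, h.symm⟩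
  have hyv (i : Fin 6) : y ≠ v i := fun h ↦ hy ⟨i, h.symm⟩
  exact hfree <| copyIn_oddPrism_one ha.1 hb (hv a b hab) hc.2.symm (hv c d hcd) hd hc.1
    ha.2.symm (hv b d hbd) hxy (hxv d) (v.injective.ne hac) (v.injective.ne had)
    (v.injective.ne hbc) (hyv b).symm

theorem not_adj_of_apexEdgePrism (hfree : ¬ CopyIn (oddPrism 1) G)
    (hv : ∀ i j, pathSq6.Adj i j → G.Adj (v i) (v j)) {x y : V}
    (hx : x ∉ Set.range v) (hy : y ∉ Set.range v)
    (h : ApexEdgePrism (nbrIndices G v x) (nbrIndices G v y)) : ¬ G.Adj x y := by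
  intro hxy
  obtain ⟨a, ha, b, hb, c, hc, d, hd, hab, hcd, hac, hbd, had, hbc⟩ := h
  rw [mem_nbrIndices] at ha hb hc hd
  have hxv (i : Fin 6) : x ≠ v i := fun h ↦ hx ⟨i, h.symm⟩
  have hyv (i : Fin 6) : y ≠ v i := fun h ↦ hy ⟨i, h.symm⟩
  exact hfree <| copyIn_oddPrism_one ha hb (hv a b hab) hc hd (hv c d hcd) hxy (hv a c hac)
    (hv b d hbd) (hxv c) (hxv d) (hyv a).symm (v.injective.ne had) (hyv b).symm
    (v.injective.ne hbc)

theorem nbrIndices_mem_admissibleQuadruples (hfree : ¬ CopyIn (oddPrism 1) G)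
    (hv : ∀ i j, pathSq6.Adj i j → G.Adj (v i) (v j)) {x : V} (hx : x ∉ Set.range v)
    (h4 : {i | G.Adj x (v i)}.ncard = 4) : nbrIndices G v x ∈ admissibleQuadruples := by
  rw [← coe_nbrIndices, Set.ncard_coe_finset] at h4
  exact mem_admissibleQuadruples h4 (not_oneApexPrism hfree hv hx)

theorem not_adj_and_isExceptionalPair (hfree : ¬ CopyIn (oddPrism 1) G)
    (hv : ∀ i j, pathSq6.Adj i j → G.Adj (v i) (v j)) {x y : V} (hxy : x ≠ y)
    (hx : x ∉ Set.range v) (h4x : {i | G.Adj x (v i)}.ncard = 4)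
    (hy : y ∉ Set.range v) (h4y : {i | G.Adj y (v i)}.ncard = 4) :
    ¬ G.Adj x y ∧ IsExceptionalPair (nbrIndices G v x) (nbrIndices G v y) := by
  have hSx := nbrIndices_mem_admissibleQuadruples hfree hv hx h4x
  have hSy := nbrIndices_mem_admissibleQuadruples hfree hv hy h4y
  have hexc := isExceptionalPair_of_not_twoApexPrism hSx hSy
    (not_twoApexPrism hfree hv hxy hx hy) (not_twoApexPrism hfree hv hxy.symm hy hx)
  exact ⟨not_adj_of_apexEdgePrism hfree hv hx hy (hexc.apexEdgePrism hSx hSy), hexc⟩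

end

/-- Let `G` be `C_3□P_2`-free and let `v : Fin 6 ↪ V` be a copy of
`P_6²` in `G`. At most two vertices outside the copy have exactly `4` neighbors among
`v_1, …, v_6`; moreover any two such distinct vertices `x`, `y` are non-adjacent and
the unordered pair of their neighbor sets is one of three listed pairs. -/
theorem at_most_two_degree_four_vertices {V : Type*} (G : SimpleGraph V)
    (hfree : ¬ CopyIn (oddPrism 1) G)
    (v : Fin 6 ↪ V) (hv : ∀ i j, pathSq6.Adj i j → G.Adj (v i) (v j)) :
    {w | w ∉ Set.range v ∧ {i : Fin 6 | G.Adj w (v i)}.ncard = 4}.encard ≤ 2 ∧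
    ∀ x y, x ≠ y →
      x ∉ Set.range v → {i : Fin 6 | G.Adj x (v i)}.ncard = 4 →
      y ∉ Set.range v → {i : Fin 6 | G.Adj y (v i)}.ncard = 4 →
      ¬ G.Adj x y ∧
      (({{i : Fin 6 | G.Adj x (v i)}, {i : Fin 6 | G.Adj y (v i)}} : Set (Set (Fin 6)))
            = {{0, 1, 2, 3}, {0, 2, 4, 5}} ∨
        ({{i : Fin 6 | G.Adj x (v i)}, {i : Fin 6 | G.Adj y (v i)}} : Set (Set (Fin 6)))
            = {{2, 3, 4, 5}, {0, 1, 3, 5}} ∨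
        ({{i : Fin 6 | G.Adj x (v i)}, {i : Fin 6 | G.Adj y (v i)}} : Set (Set (Fin 6)))
            = {{0, 1, 2, 3}, {2, 3, 4, 5}}) := by
  have pair {x y : V} (hxy : x ≠ y) (hx : x ∉ Set.range v ∧ {i | G.Adj x (v i)}.ncard = 4)
      (hy : y ∉ Set.range v ∧ {i | G.Adj y (v i)}.ncard = 4) :=
    not_adj_and_isExceptionalPair hfree hv hxy hx.1 hx.2 hy.1 hy.2
  have mem {x : V} (hx : x ∉ Set.range v ∧ {i | G.Adj x (v i)}.ncard = 4) :=
    nbrIndices_mem_admissibleQuadruples hfree hv hx.1 hx.2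
  refine ⟨Set.encard_le_two_of_not_three fun x hx y hy z hz hxy hxz hyz ↦ ?_,
    fun x y hxy hx h4x hy h4y ↦ ?_⟩
  · exact IsExceptionalPair.not_triangle (mem hx) (mem hy) (mem hz) (pair hxy hx hy).2
      (pair hxz hx hz).2 (pair hyz hy hz).2
  · obtain ⟨hadj, hexc⟩ := pair hxy ⟨hx, h4x⟩ ⟨hy, h4y⟩
    simpa only [coe_nbrIndices] using And.intro hadj hexc.coe
end

section
/- Let G be a C_3□P_2-free graph and let v_1,...,v_6 be six distinct vertices of G such that v_i and v_j are adjacent whenever 1 ≤ |i−j| ≤ 2 (a copy of P_6^2). Suppose G has two further vertices x and y outside {v_1,...,v_6} such that the neighbor set of x in {v_1,...,v_6} is {v_1,v_2,v_3,v_4} and the neighbor set of y in {v_1,...,v_6} is {v_3,v_4,v_5,v_6} (the configuration H_2). Then the number of edges of G with both endpoints in {v_1,...,v_6} is at most 11, with equality if and only if both v_1v_4 and v_3v_6 are edges of G. -/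
open SimpleGraph

lemma prism_copy {V : Type*} (G : SimpleGraph V) (a₁ a₂ a₃ b₁ b₂ b₃ : V)
    (hab : [a₁, a₂, a₃, b₁, b₂, b₃].Nodup)
    (e12 : G.Adj a₁ a₂) (e23 : G.Adj a₂ a₃) (e13 : G.Adj a₁ a₃)
    (f12 : G.Adj b₁ b₂) (f23 : G.Adj b₂ b₃) (f13 : G.Adj b₁ b₃)
    (m1 : G.Adj a₁ b₁) (m2 : G.Adj a₂ b₂) (m3 : G.Adj a₃ b₃) :
    CopyIn (oddPrism 1) G := by
  simp only [List.nodup_cons, List.mem_cons, List.not_mem_nil, or_false,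
    List.nodup_nil, and_true, not_or] at hab
  obtain ⟨⟨h1,h2,h3,h4,h5⟩,⟨h6,h7,h8,h9⟩,⟨h10,h11,h12⟩,⟨h13,h14⟩,h15⟩ := hab
  let f : Fin 3 × Fin 2 → V := fun p =>
    match p with
    | (0, 0) => a₁ | (1, 0) => a₂ | (2, 0) => a₃
    | (0, 1) => b₁ | (1, 1) => b₂ | (2, 1) => b₃
  have hinj : Function.Injective f := by
    intro ⟨i, s⟩ ⟨j, t⟩ h
    fin_cases i <;> fin_cases j <;> fin_cases s <;> fin_cases t <;>
      simp_all [f]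
  refine ⟨⟨f, hinj⟩, ?_⟩
  intro ⟨i, s⟩ ⟨j, t⟩ hadj
  simp only [oddPrism, boxProd_adj, cycleGraph_adj, pathGraph_adj] at hadj
  fin_cases i <;> fin_cases j <;> fin_cases s <;> fin_cases t <;>
    simp_all [f] <;>
    first | exact e12 | exact e12.symm | exact e23 | exact e23.symm
          | exact e13 | exact e13.symm
          | exact f12 | exact f12.symm | exact f23 | exact f23.symm
          | exact f13 | exact f13.symm
          | exact m1 | exact m1.symm | exact m2 | exact m2.symm
          | exact m3 | exact m3.symm

/-- Configuration `H₂`: a copy `v` of `P_6²` in a `C_3□P_2`-free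
graph `G` together with outside vertices `x`, `y` whose neighbor sets in the copy are
`{v_1, v_2, v_3, v_4}` and `{v_3, v_4, v_5, v_6}` respectively. Then the copy spans
at most `11` edges of `G`, with equality iff both `v_1 v_4` and `v_3 v_6` are
edges. -/
theorem config_H2_edge_bound {V : Type*} (G : SimpleGraph V)
    (hfree : ¬ CopyIn (oddPrism 1) G)
    (v : Fin 6 ↪ V) (hv : ∀ i j, pathSq6.Adj i j → G.Adj (v i) (v j))
    (x y : V) (hx : x ∉ Set.range v) (hy : y ∉ Set.range v)
    (hNx : {i : Fin 6 | G.Adj x (v i)} = {0, 1, 2, 3})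
    (hNy : {i : Fin 6 | G.Adj y (v i)} = {2, 3, 4, 5}) :
    (G.induce (Set.range v)).edgeSet.ncard ≤ 11 ∧
      ((G.induce (Set.range v)).edgeSet.ncard = 11 ↔
        G.Adj (v 0) (v 3) ∧ G.Adj (v 2) (v 5)) := by
  -- basic adjacency facts
  have hp : ∀ i j : Fin 6, i ≠ j →
      ((i:ℕ) < j ∧ (j:ℕ) ≤ i + 2 ∨ (j:ℕ) < i ∧ (i:ℕ) ≤ j + 2) → G.Adj (v i) (v j) :=
    fun i j h1 h2 => hv i j (by rw [pathSq6, fromRel_adj]; exact ⟨h1, h2⟩)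
  have e01 : G.Adj (v 0) (v 1) := hp 0 1 (by decide) (by decide)
  have e12 : G.Adj (v 1) (v 2) := hp 1 2 (by decide) (by decide)
  have e23 : G.Adj (v 2) (v 3) := hp 2 3 (by decide) (by decide)
  have e34 : G.Adj (v 3) (v 4) := hp 3 4 (by decide) (by decide)
  have e45 : G.Adj (v 4) (v 5) := hp 4 5 (by decide) (by decide)
  have e02 : G.Adj (v 0) (v 2) := hp 0 2 (by decide) (by decide)
  have e13 : G.Adj (v 1) (v 3) := hp 1 3 (by decide) (by decide)
  have e24 : G.Adj (v 2) (v 4) := hp 2 4 (by decide) (by decide)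
  have e35 : G.Adj (v 3) (v 5) := hp 3 5 (by decide) (by decide)
  have hxa : ∀ i : Fin 6, i ∈ ({0,1,2,3} : Set (Fin 6)) → G.Adj x (v i) := by
    intro i hi
    have := (Set.ext_iff.mp hNx i).mpr hi
    exact this
  have hya : ∀ i : Fin 6, i ∈ ({2,3,4,5} : Set (Fin 6)) → G.Adj y (v i) := by
    intro i hi
    exact (Set.ext_iff.mp hNy i).mpr hi
  have ax0 : G.Adj x (v 0) := hxa 0 (by simp)
  have ax1 : G.Adj x (v 1) := hxa 1 (by simp)
  have ax2 : G.Adj x (v 2) := hxa 2 (by simp)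
  have ax3 : G.Adj x (v 3) := hxa 3 (by simp)
  have ay2 : G.Adj y (v 2) := hya 2 (by simp)
  have ay3 : G.Adj y (v 3) := hya 3 (by simp)
  have ay4 : G.Adj y (v 4) := hya 4 (by simp)
  have ay5 : G.Adj y (v 5) := hya 5 (by simp)
  have hxv : ∀ i : Fin 6, x ≠ v i := fun i h => hx ⟨i, h.symm⟩
  have hyv : ∀ i : Fin 6, y ≠ v i := fun i h => hy ⟨i, h.symm⟩
  have hvv : ∀ i j : Fin 6, i ≠ j → v i ≠ v j := fun i j h => v.injective.ne h
  -- forbidden edges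
  have na04 : ¬ G.Adj (v 0) (v 4) := fun h => hfree <|
    prism_copy G x (v 0) (v 1) (v 3) (v 4) (v 2)
      (by
        simp only [List.nodup_cons, List.mem_cons, List.not_mem_nil, or_false,
          List.nodup_nil, and_true, not_or]
        exact ⟨⟨hxv 0, hxv 1, hxv 3, hxv 4, hxv 2⟩,
          ⟨hvv 0 1 (by decide), hvv 0 3 (by decide), hvv 0 4 (by decide), hvv 0 2 (by decide)⟩,
          ⟨hvv 1 3 (by decide), hvv 1 4 (by decide), hvv 1 2 (by decide)⟩,
          ⟨hvv 3 4 (by decide), hvv 3 2 (by decide)⟩, ⟨hvv 4 2 (by decide), not_false⟩⟩)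
      ax0 e01 ax1 e34 e24.symm e23.symm ax3 h e12
  have na14 : ¬ G.Adj (v 1) (v 4) := fun h => hfree <|
    prism_copy G x (v 0) (v 1) (v 3) (v 2) (v 4)
      (by
        simp only [List.nodup_cons, List.mem_cons, List.not_mem_nil, or_false,
          List.nodup_nil, and_true, not_or]
        exact ⟨⟨hxv 0, hxv 1, hxv 3, hxv 2, hxv 4⟩,
          ⟨hvv 0 1 (by decide), hvv 0 3 (by decide), hvv 0 2 (by decide), hvv 0 4 (by decide)⟩,
          ⟨hvv 1 3 (by decide), hvv 1 2 (by decide), hvv 1 4 (by decide)⟩,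
          ⟨hvv 3 2 (by decide), hvv 3 4 (by decide)⟩, ⟨hvv 2 4 (by decide), not_false⟩⟩)
      ax0 e01 ax1 e23.symm e24 e34 ax3 e02 h
  have na15 : ¬ G.Adj (v 1) (v 5) := fun h => hfree <|
    prism_copy G y (v 5) (v 4) (v 2) (v 1) (v 3)
      (by
        simp only [List.nodup_cons, List.mem_cons, List.not_mem_nil, or_false,
          List.nodup_nil, and_true, not_or]
        exact ⟨⟨hyv 5, hyv 4, hyv 2, hyv 1, hyv 3⟩,
          ⟨hvv 5 4 (by decide), hvv 5 2 (by decide), hvv 5 1 (by decide), hvv 5 3 (by decide)⟩,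
          ⟨hvv 4 2 (by decide), hvv 4 1 (by decide), hvv 4 3 (by decide)⟩,
          ⟨hvv 2 1 (by decide), hvv 2 3 (by decide)⟩, ⟨hvv 1 3 (by decide), not_false⟩⟩)
      ay5 e45.symm ay4 e12.symm e13 e23 ay2 h.symm e34.symm
  have na05 : ¬ G.Adj (v 0) (v 5) := fun h => hfree <|
    prism_copy G (v 0) (v 1) (v 2) (v 5) (v 3) (v 4)
      (by
        simp only [List.nodup_cons, List.mem_cons, List.not_mem_nil, or_false,
          List.nodup_nil, and_true, not_or]
        exact ⟨⟨hvv 0 1 (by decide), hvv 0 2 (by decide), hvv 0 5 (by decide), hvv 0 3 (by decide), hvv 0 4 (by decide)⟩,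
          ⟨hvv 1 2 (by decide), hvv 1 5 (by decide), hvv 1 3 (by decide), hvv 1 4 (by decide)⟩,
          ⟨hvv 2 5 (by decide), hvv 2 3 (by decide), hvv 2 4 (by decide)⟩,
          ⟨hvv 5 3 (by decide), hvv 5 4 (by decide)⟩, ⟨hvv 3 4 (by decide), not_false⟩⟩)
      e01 e12 e02 e35.symm e34 e45.symm h e13 e24
  classical
  set E : Set (Sym2 (Fin 6)) := (G.comap ⇑v).edgeSet with hE
  have iso : (G.comap ⇑v) ≃g (G.induce (Set.range ⇑v)) :=
    { Equiv.ofInjective ⇑v v.injective with map_rel_iff' := Iff.rfl }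
  have hcard : (G.induce (Set.range ⇑v)).edgeSet.ncard = E.ncard := by
    rw [← Nat.card_coe_set_eq, ← Nat.card_coe_set_eq]
    exact Nat.card_congr iso.mapEdgeSet.symm
  let S9 : Finset (Sym2 (Fin 6)) :=
    {s(0,1), s(1,2), s(2,3), s(3,4), s(4,5), s(0,2), s(1,3), s(2,4), s(3,5)}
  let S11 : Finset (Sym2 (Fin 6)) := insert s(0,3) (insert s(2,5) S9)
  have h9 : (↑S9 : Set (Sym2 (Fin 6))) ⊆ E := by
    intro e he
    simp only [S9, Finset.coe_insert, Set.mem_insert_iff, Finset.coe_singleton,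
      Set.mem_singleton_iff] at he
    rcases he with rfl|rfl|rfl|rfl|rfl|rfl|rfl|rfl|rfl
    exacts [e01, e12, e23, e34, e45, e02, e13, e24, e35]
  have h11 : E ⊆ ↑S11 := by
    intro e he
    induction e using Sym2.ind with
    | _ i j =>
      rw [hE, SimpleGraph.mem_edgeSet] at he
      have he' : G.Adj (v i) (v j) := he
      fin_cases i <;> fin_cases j <;>
        first
          | exact absurd he' G.irrefl
          | exact absurd he' na04 | exact absurd he'.symm na04
          | exact absurd he' na05 | exact absurd he'.symm na05
          | exact absurd he' na14 | exact absurd he'.symm na14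
          | exact absurd he' na15 | exact absurd he'.symm na15
          | (apply Finset.mem_coe.mpr; decide)
  have hs11card : (↑S11 : Set (Sym2 (Fin 6))).ncard = 11 := by
    rw [Set.ncard_coe_finset]; decide
  have hle : E.ncard ≤ 11 := by
    rw [← hs11card]; exact Set.ncard_le_ncard h11 (S11.finite_toSet)
  refine ⟨by rw [hcard]; exact hle, ?_, ?_⟩
  · intro h
    rw [hcard] at h
    have heq : E = ↑S11 :=
      Set.eq_of_subset_of_ncard_le h11 (by rw [hs11card, h]) (S11.finite_toSet)
    constructor
    · have : s(0,3) ∈ E := by rw [heq]; apply Finset.mem_coe.mpr; decide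
      exact this
    · have : s(2,5) ∈ E := by rw [heq]; apply Finset.mem_coe.mpr; decide
      exact this
  · rintro ⟨ha, hb⟩
    have hsub : (↑S11 : Set (Sym2 (Fin 6))) ⊆ E := by
      intro e he
      simp only [S11, Finset.coe_insert, Set.mem_insert_iff] at he
      rcases he with rfl | rfl | he
      · exact ha
      · exact hb
      · exact h9 he
    rw [hcard, subset_antisymm h11 hsub, hs11card]
end

section
/- For every integer k ≥ 2 there exists a constant C > 0 such that for all positive integers n, ex(n, C_{2k}□P_2) ≤ C · n^{5/3}. -/
open SimpleGraph

/-- The even prism `C_{2k} □ P_2`. -/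
def evenPrism (k : ℕ) : SimpleGraph (Fin (2 * k) × Fin 2) :=
  cycleGraph (2 * k) □ pathGraph 2

/-!
Dependent random choice. If `G` has `n` vertices and `e > (2k+1) n^{5/3}` edges, convexity gives
`∑ deg(v)³ ≥ 8e³/n² > n³((4k)³ + 2k)`, i.e. the common neighbourhoods `N(t)` of the `n³` triples
`t` have average size above `(4k)³ + 2k`. At most `n³ (4k)³` pairs `(t, s)` have `s` a triple in
`N(t)` with fewer than `4k` common neighbours, so some `N(t)`, once one vertex of each such `s` is
deleted, keeps a set `X` of at least `2k` vertices any three of which have `4k` common neighbours.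
The prism is bipartite with a side `A` of `2k` vertices such that every other vertex has three
neighbours, all in `A`: embed `A` into `X`, then the other side injectively into the common
neighbourhoods of the images of its neighbours (Hall's theorem).
-/

open Finset

lemma Finset.card_filter_forall_mem {V : Type*} [Fintype V] [DecidableEq V] {r : ℕ}
    (S : Finset V) : #{t : Fin r → V | ∀ i, t i ∈ S} = #S ^ r := by
  rw [← Fintype.card_piFinset_const]
  congr 1
  ext t
  simp

lemma Finset.exists_injective_forall_mem_of_card_le {ι α : Type*} [Fintype ι] [DecidableEq α]
    (t : ι → Finset α) (h : ∀ i, Fintype.card ι ≤ #(t i)) :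
    ∃ f : ι → α, Function.Injective f ∧ ∀ i, f i ∈ t i := by
  refine (all_card_le_biUnion_card_iff_exists_injective t).1 fun s => ?_
  obtain rfl | ⟨i, hi⟩ := s.eq_empty_or_nonempty
  · simp
  · exact (card_le_univ s).trans ((h i).trans (card_le_card (subset_biUnion_of_mem t hi)))

namespace SimpleGraph

variable {V : Type*} [Fintype V] (G : SimpleGraph V) [DecidableRel G.Adj]

def commonNeighborFinset {r : ℕ} (s : Fin r → V) : Finset V := {v | ∀ i, G.Adj (s i) v}

variable {G}

@[simp]
lemma mem_commonNeighborFinset {r : ℕ} {s : Fin r → V} {v : V} :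
    v ∈ G.commonNeighborFinset s ↔ ∀ i, G.Adj (s i) v := by
  simp [commonNeighborFinset]

lemma forall_mem_commonNeighborFinset_comm {r : ℕ} (s t : Fin r → V) :
    (∀ i, s i ∈ G.commonNeighborFinset t) ↔ ∀ j, t j ∈ G.commonNeighborFinset s := by
  simp only [mem_commonNeighborFinset]
  exact ⟨fun h j i => (h i j).symm, fun h i j => (h j i).symm⟩

variable (G) [DecidableEq V]

lemma sum_card_commonNeighborFinset (r : ℕ) :
    ∑ t : Fin r → V, #(G.commonNeighborFinset t) = ∑ v, G.degree v ^ r := by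
  calc ∑ t : Fin r → V, #(G.commonNeighborFinset t)
      = ∑ v, #{t : Fin r → V | ∀ i, t i ∈ G.neighborFinset v} := by
        simp only [commonNeighborFinset, card_filter, mem_neighborFinset, adj_comm]
        exact sum_comm
    _ = ∑ v, G.degree v ^ r := by simp only [card_filter_forall_mem, card_neighborFinset_eq_degree]

theorem exists_le_card_forall_le_card_commonNeighborFinset {r : ℕ} [NeZero r] {m a : ℕ}
    (h : Fintype.card V ^ r * (m ^ r + a) < ∑ v, G.degree v ^ r) :
    ∃ X : Finset V, a ≤ #X ∧
      ∀ s : Fin r → V, (∀ i, s i ∈ X) → m ≤ #(G.commonNeighborFinset s) := by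
  set bad : Finset (Fin r → V) := {s | #(G.commonNeighborFinset s) < m}
  set badIn : (Fin r → V) → Finset (Fin r → V) :=
    fun t => {s ∈ bad | ∀ i, s i ∈ G.commonNeighborFinset t}
  have hbad : ∑ t, #(badIn t) ≤ Fintype.card V ^ r * m ^ r :=
    calc ∑ t, #(badIn t)
        = ∑ s ∈ bad, #{t : Fin r → V | ∀ i, s i ∈ G.commonNeighborFinset t} := by
          simp only [badIn, card_filter]
          exact sum_comm
      _ = ∑ s ∈ bad, #(G.commonNeighborFinset s) ^ r := by
          refine sum_congr rfl fun s _ => ?_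
          simp only [forall_mem_commonNeighborFinset_comm s, card_filter_forall_mem]
      _ ≤ ∑ _s ∈ bad, m ^ r :=
          sum_le_sum fun s hs => Nat.pow_le_pow_left (mem_filter.1 hs).2.le r
      _ ≤ Fintype.card V ^ r * m ^ r := by
          rw [sum_const, smul_eq_mul]
          gcongr
          simpa using card_le_univ bad
  obtain ⟨t, ht⟩ : ∃ t, #(badIn t) + a ≤ #(G.commonNeighborFinset t) := by
    by_contra! H
    have := sum_le_sum (s := univ) fun t _ => Nat.lt_iff_add_one_le.1 (H t)
    rw [sum_add_distrib, sum_card_commonNeighborFinset, sum_add_distrib] at this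
    simp only [sum_const, card_univ, Fintype.card_pi, prod_const, Fintype.card_fin,
      smul_eq_mul] at this
    rw [mul_add] at h
    omega
  refine ⟨G.commonNeighborFinset t \ (badIn t).image (fun s => s 0), ?_, fun s hs => ?_⟩
  · have := le_card_sdiff ((badIn t).image (fun s => s 0)) (G.commonNeighborFinset t)
    have := card_image_le (s := badIn t) (f := fun s => s 0)
    omega
  · by_contra! hlt
    refine (mem_sdiff.1 (hs 0)).2 (mem_image_of_mem (fun s : Fin r → V => s 0) ?_)
    simp only [badIn, bad, mem_filter, mem_univ, true_and]
    exact ⟨hlt, fun i => (mem_sdiff.1 (hs i)).1⟩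

variable {G}

theorem copyIn_of_forall_le_card_commonNeighborFinset {β : Type*} [Fintype β]
    {H : SimpleGraph β} {r : ℕ} (A : Finset β)
    (hA : ∀ x ∈ A, ∀ y ∈ A, ¬H.Adj x y)
    (hAc : ∀ y ∉ A, ∃ t : Fin r → β, (∀ i, t i ∈ A) ∧ ∀ x, H.Adj x y → ∃ i, t i = x)
    (X : Finset V) (hX : #A ≤ #X)
    (hcn : ∀ s : Fin r → V, (∀ i, s i ∈ X) → Fintype.card β ≤ #(G.commonNeighborFinset s)) :
    CopyIn H G := by
  classical
  choose t htA ht using hAc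
  obtain ⟨f, hf_inj, hfX⟩ := exists_injective_forall_mem_of_card_le (fun _ : A => X)
    fun _ => by simpa using hX
  set tA : ∀ y : {y // y ∉ A}, Fin r → A := fun y i => ⟨t y y.2 i, htA y y.2 i⟩
  obtain ⟨g, hg_inj, hg⟩ := exists_injective_forall_mem_of_card_le
    (fun y => G.commonNeighborFinset (f ∘ tA y) \ univ.image f) fun y => by
      have hcn_y := hcn (f ∘ tA y) fun i => hfX _
      have hsdiff := le_card_sdiff (univ.image f) (G.commonNeighborFinset (f ∘ tA y))
      have himage : #(univ.image f) ≤ #A := by simpa using card_image_le (s := univ) (f := f)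
      have hcompl := Fintype.card_subtype_compl (p := (· ∈ A))
      simp only [Fintype.card_coe] at hcompl
      omega
  have hg_adj : ∀ y i, G.Adj (f (tA y i)) (g y) := fun y =>
    mem_commonNeighborFinset.1 (mem_sdiff.1 (hg y)).1
  have hfg : ∀ x y, f x ≠ g y := fun x y hxy =>
    (mem_sdiff.1 (hg y)).2 (hxy ▸ mem_image_of_mem f (mem_univ x))
  let F : β → V := fun x => if hx : x ∈ A then f ⟨x, hx⟩ else g ⟨x, hx⟩
  have hF_inj : Function.Injective F := by
    intro x y hxy
    by_cases hx : x ∈ A <;> by_cases hy : y ∈ A <;>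
      simp only [F, hx, hy, dite_true, dite_false] at hxy
    · exact congrArg Subtype.val (hf_inj hxy)
    · exact absurd hxy (hfg _ _)
    · exact absurd hxy.symm (hfg _ _)
    · exact congrArg Subtype.val (hg_inj hxy)
  have hF_adj : ∀ x y, x ∈ A → y ∉ A → H.Adj x y → G.Adj (F x) (F y) := by
    intro x y hx hy hxy
    obtain ⟨i, rfl⟩ := ht y hy x hxy
    simpa [F, hx, hy] using hg_adj ⟨y, hy⟩ i
  refine ⟨⟨F, hF_inj⟩, fun x y hxy => ?_⟩
  by_cases hx : x ∈ A <;> by_cases hy : y ∈ A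
  · exact absurd hxy (hA x hx y hy)
  · exact hF_adj x y hx hy hxy
  · exact (hF_adj y x hy hx hxy.symm).symm
  · obtain ⟨i, rfl⟩ := ht y hy x hxy
    exact absurd (htA y hy i) hx

lemma ofNat_two_ne_of_cycleGraph_adj {N : ℕ} (hN : Even N) {u v : Fin N}
    (h : (cycleGraph N).Adj u v) :
    Fin.ofNat 2 u ≠ Fin.ofNat 2 v := by
  have : decide (u.val % 2 = 0) ≠ decide (v.val % 2 = 0) :=
    (cycleGraph.bicoloring_of_even N hN).valid h
  simp only [ne_eq, decide_eq_decide, Fin.ext_iff, Fin.val_ofNat] at this ⊢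
  omega

theorem copyIn_cycleGraph_boxProd_pathGraph {N : ℕ} (hN : Even N) (X : Finset V) (hX : N ≤ #X)
    (hcn : ∀ s : Fin 3 → V, (∀ i, s i ∈ X) → 2 * N ≤ #(G.commonNeighborFinset s)) :
    CopyIn (cycleGraph N □ pathGraph 2) G := by
  have fin_two : ∀ a b c : Fin 2, a ≠ b → c ≠ b → a = c := by decide
  set A : Finset (Fin N × Fin 2) :=
    univ.map ⟨fun i => (i, Fin.ofNat 2 i), fun a b h => (Prod.ext_iff.1 h).1⟩
  have hmem : ∀ p, p ∈ A ↔ Fin.ofNat 2 p.1 = p.2 := by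
    rintro ⟨i, j⟩
    simp [A, Prod.ext_iff]
  refine copyIn_of_forall_le_card_commonNeighborFinset A ?_ ?_ X (by simpa [A] using hX)
    (by simpa [mul_comm] using hcn)
  · rintro x hx y hy hxy
    rw [hmem] at hx hy
    rcases boxProd_adj.1 hxy with ⟨hc, h2⟩ | ⟨hp, h1⟩
    · exact ofNat_two_ne_of_cycleGraph_adj hN hc (by rw [hx, hy, h2])
    · exact hp.ne (by rw [← hx, ← hy, h1])
  · rintro ⟨i, j⟩ hy
    rw [hmem] at hy
    obtain ⟨n, rfl⟩ : ∃ n, N = n + 2 := by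
      obtain ⟨m, hm⟩ := hN
      exact ⟨N - 2, by have := i.pos; omega⟩
    have hnext : Fin.ofNat 2 ↑(i + 1) = j :=
      fin_two _ _ _ (ofNat_two_ne_of_cycleGraph_adj hN (by simp [cycleGraph_adj])) (Ne.symm hy)
    have hprev : Fin.ofNat 2 ↑(i - 1) = j :=
      fin_two _ _ _ (ofNat_two_ne_of_cycleGraph_adj hN (by simp [cycleGraph_adj])) (Ne.symm hy)
    refine ⟨![(i + 1, j), (i - 1, j), (i, Fin.ofNat 2 i)], fun idx => ?_, ?_⟩
    · fin_cases idx
      exacts [(hmem _).2 hnext, (hmem _).2 hprev, (hmem _).2 rfl]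
    · rintro ⟨i', j'⟩ hxy
      rcases boxProd_adj.1 hxy with ⟨hc | hc, rfl⟩ | ⟨hp, rfl⟩
      · exact ⟨0, by simp [← hc]⟩
      · exact ⟨1, by simp [← hc]⟩
      · exact ⟨2, Prod.ext rfl (fin_two _ _ _ hy hp.ne)⟩

theorem card_edgeFinset_pow_three_le_of_not_copyIn_evenPrism (k : ℕ)
    (h : ¬CopyIn (evenPrism k) G) :
    #G.edgeFinset ^ 3 ≤ (2 * k + 1) ^ 3 * Fintype.card V ^ 5 := by
  by_contra! he
  set n := Fintype.card V
  have hjensen : (2 * #G.edgeFinset) ^ 3 ≤ n ^ 2 * ∑ v, G.degree v ^ 3 := by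
    rw [← G.sum_degrees_eq_twice_card_edges]
    simpa using pow_sum_le_card_mul_sum_pow (s := univ) (f := fun v => G.degree v)
      (fun _ _ => Nat.zero_le _) 2
  have hsum : n ^ 3 * ((2 * (2 * k)) ^ 3 + 2 * k) < ∑ v, G.degree v ^ 3 := by
    refine Nat.lt_of_mul_lt_mul_left (a := n ^ 2) ?_
    calc n ^ 2 * (n ^ 3 * ((2 * (2 * k)) ^ 3 + 2 * k))
        = n ^ 5 * ((2 * (2 * k)) ^ 3 + 2 * k) := by ring
      _ ≤ n ^ 5 * (8 * (2 * k + 1) ^ 3) := by gcongr; nlinarith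
      _ = 8 * ((2 * k + 1) ^ 3 * n ^ 5) := by ring
      _ < 8 * #G.edgeFinset ^ 3 := by omega
      _ = (2 * #G.edgeFinset) ^ 3 := by ring
      _ ≤ n ^ 2 * ∑ v, G.degree v ^ 3 := hjensen
  obtain ⟨X, hX, hcn⟩ := G.exists_le_card_forall_le_card_commonNeighborFinset hsum
  exact h (copyIn_cycleGraph_boxProd_pathGraph (even_two_mul k) X hX hcn)

theorem card_edgeFinset_le_of_not_copyIn_evenPrism (k : ℕ) (h : ¬CopyIn (evenPrism k) G) :
    (#G.edgeFinset : ℝ) ≤ (2 * k + 1) * (Fintype.card V : ℝ) ^ ((5 : ℝ) / 3) := by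
  refine le_of_pow_le_pow_left₀ three_ne_zero (by positivity) ?_
  rw [mul_pow, ← Real.rpow_natCast ((Fintype.card V : ℝ) ^ ((5 : ℝ) / 3)) 3,
    ← Real.rpow_mul (Nat.cast_nonneg _), show (5 : ℝ) / 3 * (3 : ℕ) = (5 : ℕ) by norm_num,
    Real.rpow_natCast]
  exact_mod_cast card_edgeFinset_pow_three_le_of_not_copyIn_evenPrism k h

end SimpleGraph

lemma exNum_le_of_forall {α : Type*} {n : ℕ} {H : SimpleGraph α} {b : ℝ} (hb : 0 ≤ b)
    (h : ∀ G : SimpleGraph (Fin n), ¬CopyIn H G → (G.edgeSet.ncard : ℝ) ≤ b) :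
    (exNum n H : ℝ) ≤ b :=
  (Nat.cast_le.2 (csSup_le' (by rintro _ ⟨G, hG, rfl⟩; exact Nat.le_floor (h G hG)))).trans
    (Nat.floor_le hb)

theorem even_prism_extremal_number_upper_general (k : ℕ) :
    ∃ C : ℝ, 0 < C ∧ ∀ n : ℕ, 0 < n →
      (exNum n (evenPrism k) : ℝ) ≤ C * (n : ℝ) ^ ((5 : ℝ) / 3) := by
  refine ⟨2 * k + 1, by positivity, fun n _ => exNum_le_of_forall (by positivity) fun G hG => ?_⟩
  classical
  rw [← coe_edgeFinset, Set.ncard_coe_finset]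
  simpa using card_edgeFinset_le_of_not_copyIn_evenPrism k hG

/-- For every `k ≥ 2` there is a constant `C > 0` such that
`ex(n, C_{2k}□P_2) ≤ C n^{5/3}` for all positive `n`. -/
theorem even_prism_extremal_number_upper (k : ℕ) (hk : 2 ≤ k) :
    ∃ C : ℝ, 0 < C ∧ ∀ n : ℕ, 0 < n →
      (exNum n (evenPrism k) : ℝ) ≤ C * (n : ℝ) ^ ((5 : ℝ) / 3) :=
  even_prism_extremal_number_upper_general k
end
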